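/- Any feasible solution of the dualized multiband robust capacity constraint is feasible for every realized deviation scenario allowed by the bands: if nonnegative reals w_k (k ∈ K) and z_i (i ∈ I) together with binary routing indicators x_i satisfy w_k + z_i ≥ δ_{ik}·x_i for all i, k and Σ_{i} d̄_i x_i + Σ_k θ_k w_k + Σ_i z_i ≤ Φ, then for every assignment σ : I → K of items to bands in which each band k is used by at most θ_k items, Σ_i (d̄_i + δ_{i,σ(i)})·x_i ≤ Φ. -/
import Mathlib


theorem dualized_multiband_feasible (I K : Type*) [Fintype I] [Fintype K] [DecidableEq K]
    (dbar : I → ℝ) (δ : I → K → ℝ) (θ : K → ℕ) (x : I → ℝ) (w : K → ℝ) (z : I → ℝ) (Φ : ℝ)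
    (hdbar : ∀ i, 0 ≤ dbar i) (hδ : ∀ i k, 0 ≤ δ i k)
    (hx : ∀ i, x i = 0 ∨ x i = 1) (hw : ∀ k, 0 ≤ w k) (hz : ∀ i, 0 ≤ z i) (hΦ : 0 ≤ Φ)
    (hdual : ∀ i k, w k + z i ≥ δ i k * x i)
    (hcap : ∑ i : I, dbar i * x i + ∑ k : K, (θ k : ℝ) * w k + ∑ i : I, z i ≤ Φ)
    (σ : I → K) (hσ : ∀ k, (Finset.univ.filter (fun i : I => σ i = k)).card ≤ θ k) :
    ∑ i : I, (dbar i + δ i (σ i)) * x i ≤ Φ := by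
  have h1 : ∑ i : I, δ i (σ i) * x i ≤ ∑ i : I, (w (σ i) + z i) :=
    Finset.sum_le_sum fun i _ => hdual i (σ i)
  have h2 : ∑ i : I, w (σ i) ≤ ∑ k : K, (θ k : ℝ) * w k := by
    rw [← Finset.sum_fiberwise Finset.univ σ (fun i => w (σ i))]
    refine Finset.sum_le_sum fun k _ => ?_
    have : ∑ i ∈ Finset.univ.filter (fun i : I => σ i = k), w (σ i)
        = ((Finset.univ.filter (fun i : I => σ i = k)).card : ℝ) * w k := by
      rw [Finset.sum_congr rfl (fun i hi => by
        rw [(Finset.mem_filter.mp hi).2]), Finset.sum_const, nsmul_eq_mul]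
    rw [this]
    exact mul_le_mul_of_nonneg_right (by exact_mod_cast hσ k) (hw k)
  have h3 : ∑ i : I, (dbar i + δ i (σ i)) * x i
      = ∑ i : I, dbar i * x i + ∑ i : I, δ i (σ i) * x i := by
    rw [← Finset.sum_add_distrib]; congr 1; ext i; ring
  rw [h3, Finset.sum_add_distrib] at *
  linarith
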